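/- Let d2, a2, h, q > 0 and 0 ≤ x1 < L. If w is a solution of the upstream toxicant boundary value problem on [x1, L] and w(x) > 0 for all x ∈ [x1, L], then for every x ∈ (x1, L) one has 0 < w'(x) < (a2/d2)·w(x). -/

import Mathlib

open Set Real

/-- `w` is a solution of the upstream toxicant boundary value problem with
parameters `d2, a2, h, q` on the interval `[x1, L]`. -/
def IsUpstreamSolution (d2 a2 h q x1 L : ℝ) (w : ℝ → ℝ) : Prop :=
  ContDiff ℝ 2 w ∧
  (∀ x ∈ Set.Icc x1 L,
      d2 * deriv (deriv w) x - a2 * deriv w x + h - q * w x = 0) ∧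
  d2 * deriv w x1 - a2 * w x1 = 0 ∧ deriv w L = 0

set_option maxHeartbeats 1600000 in
/-- for a positive solution of the upstream problem,
`0 < w' < (a2/d2) · w` on the open interval `(x1, L)`. -/
theorem upstream_deriv_bounds
    (d2 a2 h q x1 L : ℝ) (w : ℝ → ℝ)
    (hd2 : 0 < d2) (ha2 : 0 < a2) (hh : 0 < h) (hq : 0 < q)
    (hx1 : 0 ≤ x1) (hx1L : x1 < L)
    (hw : IsUpstreamSolution d2 a2 h q x1 L w)
    (hpos : ∀ x ∈ Set.Icc x1 L, 0 < w x) :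
    ∀ x ∈ Set.Ioo x1 L, 0 < deriv w x ∧ deriv w x < a2 / d2 * w x := by
  obtain ⟨hC2, hode, hbc1, hbc2⟩ := hw
  have hwdiff : Differentiable ℝ w := hC2.differentiable (by norm_num)
  set f := deriv w with hfdef
  have hf1 : ContDiff ℝ 1 f := by
    have h2 : ContDiff ℝ (1 + 1 : ℕ) w := by exact_mod_cast hC2
    exact (contDiff_succ_iff_deriv.mp h2).2.2
  have hfdiff : Differentiable ℝ f := hf1.differentiable (by norm_num)
  have hfc : Continuous f := hfdiff.continuous
  set g : ℝ → ℝ := fun x => (a2 * f x - h + q * w x) / d2 with hgdef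
  have hgdiff : Differentiable ℝ g :=
    (((hfdiff.const_mul a2).sub_const h).add (hwdiff.const_mul q)).div_const d2
  have hgc : Continuous g := hgdiff.continuous
  -- deriv f = g on [x1, L]
  have hfg : ∀ x ∈ Icc x1 L, deriv f x = g x := by
    intro x hx
    have hode' := hode x hx
    rw [hgdef]
    rw [eq_div_iff hd2.ne']
    linear_combination hode'
  -- derivative of g
  have hg' : ∀ x, HasDerivAt g ((a2 * deriv f x + q * f x) / d2) x := by
    intro x
    have h1 : HasDerivAt (fun x => a2 * f x - h + q * w x)
        (a2 * deriv f x + q * f x) x := by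
      have := (((hfdiff x).hasDerivAt.const_mul a2).sub_const h).add
        ((hwdiff x).hasDerivAt.const_mul q)
      exact this
    exact h1.div_const d2
  -- f is positive at x1
  have hwx1 : 0 < w x1 := hpos x1 ⟨le_rfl, hx1L.le⟩
  have hfx1 : 0 < f x1 := by nlinarith [hbc1]
  have hfL : f L = 0 := hbc2
  -- Main positivity claim
  have key : ∀ x ∈ Ioo x1 L, 0 < f x := by
    by_contra hcon
    push_neg at hcon
    obtain ⟨x0, hx0, hfx0⟩ := hcon
    -- obtain an interior minimum point with nonpositive value
    obtain ⟨c, hc, hcmin⟩ := isCompact_Icc.exists_isMinOn (nonempty_Icc.mpr hx1L.le)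
      hfc.continuousOn
    have hx0' : x0 ∈ Icc x1 L := Ioo_subset_Icc_self hx0
    have hxs : ∃ xs, xs ∈ Ioo x1 L ∧ IsMinOn f (Icc x1 L) xs ∧ f xs ≤ 0 := by
      rcases eq_or_lt_of_le hc.1 with h1 | h1
      · exfalso
        have h3 : f x1 ≤ f x0 := by rw [h1]; exact hcmin hx0'
        linarith
      · rcases eq_or_lt_of_le hc.2 with h2 | h2
        · refine ⟨x0, hx0, ?_, hfx0⟩
          have hcL : f c = 0 := by rw [h2, hfL]
          intro y hy
          have h3 : f c ≤ f y := hcmin hy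
          have h4 : f c ≤ f x0 := hcmin hx0'
          simp only [mem_setOf_eq]
          rw [hcL] at h3 h4
          calc f x0 ≤ 0 := hfx0
            _ ≤ f y := h3
        · exact ⟨c, ⟨h1, h2⟩, hcmin, le_trans (hcmin hx0') hfx0⟩
    obtain ⟨xs, hxsIoo, hxsmin, hfxs⟩ := hxs
    have hxsIcc : xs ∈ Icc x1 L := Ioo_subset_Icc_self hxsIoo
    have hdfxs : deriv f xs = 0 :=
      (hxsmin.isLocalMin (Icc_mem_nhds hxsIoo.1 hxsIoo.2)).deriv_eq_zero
    have hgxs : g xs = 0 := by rw [← hfg xs hxsIcc, hdfxs]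
    -- energy function
    set E : ℝ → ℝ := fun x => d2 * (g x * g x) - q * (f x * f x) with hEdef
    have hE' : ∀ x, HasDerivAt E
        (d2 * (((a2 * deriv f x + q * f x) / d2) * g x + g x * ((a2 * deriv f x + q * f x) / d2))
          - q * (deriv f x * f x + f x * deriv f x)) x := by
      intro x
      exact (((hg' x).mul (hg' x)).const_mul d2).sub
        (((hfdiff x).hasDerivAt.mul (hfdiff x).hasDerivAt).const_mul q)
    have hEmono : MonotoneOn E (Icc x1 xs) := by
      apply monotoneOn_of_deriv_nonneg (convex_Icc x1 xs)
      · exact ((continuous_const.mul (hgc.mul hgc)).sub (continuous_const.mul (hfc.mul hfc))).continuousOn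
      · intro x _
        exact ((hE' x).differentiableAt).differentiableWithinAt
      · intro x hx
        rw [interior_Icc] at hx
        have hxI : x ∈ Icc x1 L := ⟨hx.1.le, le_trans hx.2.le hxsIcc.2⟩
        rw [(hE' x).deriv, hfg x hxI]
        have hd2' : d2 ≠ 0 := hd2.ne'
        field_simp
        nlinarith [sq_nonneg (g x), ha2.le]
    have hEneg : ∀ x ∈ Icc x1 xs, E x ≤ 0 := by
      intro x hx
      have h1 : E x ≤ E xs := hEmono hx ⟨hxsIcc.1, le_rfl⟩ hx.2
      have h2 : E xs = - (q * (f xs * f xs)) := by rw [hEdef]; simp [hgxs]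
      nlinarith [mul_self_nonneg (f xs)]
    -- first zero of f
    set S : Set ℝ := Icc x1 xs ∩ f ⁻¹' Iic 0 with hSdef
    have hxsS : xs ∈ S := ⟨⟨hxsIcc.1, le_rfl⟩, hfxs⟩
    have hSbd : BddBelow S := ⟨x1, fun z hz => hz.1.1⟩
    have hScl : IsClosed S := isClosed_Icc.inter (isClosed_Iic.preimage hfc)
    set y := sInf S with hydef
    have hyS : y ∈ S := hScl.csInf_mem ⟨xs, hxsS⟩ hSbd
    have hfy : f y ≤ 0 := hyS.2
    have hx1y : x1 < y := by
      rcases eq_or_lt_of_le hyS.1.1 with h | h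
      · exfalso; rw [← h] at hfy; linarith
      · exact h
    have hbefore : ∀ z ∈ Ico x1 y, 0 < f z := by
      intro z hz
      by_contra hzf
      push_neg at hzf
      have hzS : z ∈ S := ⟨⟨hz.1, le_trans hz.2.le hyS.1.2⟩, hzf⟩
      exact absurd (csInf_le hSbd hzS) (not_le.mpr hz.2)
    -- Gronwall
    set k := Real.sqrt (q / d2) with hkdef
    have hkk : k * k * d2 = q := by
      rw [hkdef, Real.mul_self_sqrt (by positivity)]
      field_simp
    have hknn : 0 ≤ k := Real.sqrt_nonneg _
    set F : ℝ → ℝ := fun x => Real.exp (k * x) * f x with hFdef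
    have hF' : ∀ x, HasDerivAt F
        (Real.exp (k * x) * k * f x + Real.exp (k * x) * deriv f x) x := by
      intro x
      have he : HasDerivAt (fun x => Real.exp (k * x)) (Real.exp (k * x) * k) x := by
        have h1 : HasDerivAt (fun x : ℝ => k * x) k x := by
          simpa using (hasDerivAt_id x).const_mul k
        exact h1.exp
      exact he.mul (hfdiff x).hasDerivAt
    have hFmono : MonotoneOn F (Icc x1 y) := by
      apply monotoneOn_of_deriv_nonneg (convex_Icc x1 y)
      · exact ((Real.continuous_exp.comp (continuous_const.mul continuous_id)).mul hfc).continuousOn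
      · intro x _
        exact ((hF' x).differentiableAt).differentiableWithinAt
      · intro x hx
        rw [interior_Icc] at hx
        have hxIL : x ∈ Icc x1 L :=
          ⟨hx.1.le, le_trans (le_trans hx.2.le hyS.1.2) hxsIcc.2⟩
        have hfxpos : 0 < f x := hbefore x ⟨hx.1.le, hx.2⟩
        have hEx : E x ≤ 0 := hEneg x ⟨hx.1.le, le_trans hx.2.le hyS.1.2⟩
        rw [(hF' x).deriv, hfg x hxIL]
        have hkey : 0 ≤ k * f x + g x := by
          by_contra hlt
          push_neg at hlt
          have h1 : k * f x < -g x := by linarith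
          have h2 : 0 ≤ k * f x := mul_nonneg hknn hfxpos.le
          have h3 : (k * f x) * (k * f x) < (-g x) * (-g x) :=
            mul_self_lt_mul_self h2 h1
          have hEx' : d2 * (g x * g x) - q * (f x * f x) ≤ 0 := hEx
          have h4 := mul_lt_mul_of_pos_left h3 hd2
          have h5 : q * (f x * f x) = d2 * ((k * f x) * (k * f x)) := by
            rw [← hkk]; ring
          nlinarith [h4, hEx', h5]
        have hep : 0 < Real.exp (k * x) := Real.exp_pos _
        nlinarith
    have hFle : F x1 ≤ F y := hFmono ⟨le_rfl, hx1y.le⟩ ⟨hx1y.le, le_rfl⟩ hx1y.le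
    have hFy : F y ≤ 0 := mul_nonpos_of_nonneg_of_nonpos (Real.exp_pos _).le hfy
    have hFx1 : 0 < F x1 := mul_pos (Real.exp_pos _) hfx1
    linarith
  -- Now the upper bound via v = d2 f - a2 w
  intro x hx
  refine ⟨key x hx, ?_⟩
  set v : ℝ → ℝ := fun t => d2 * f t - a2 * w t with hvdef
  set dv : ℝ → ℝ := fun t => q * w t - h with hdvdef
  have hvcont : Continuous v := ((continuous_const.mul hfc).sub (continuous_const.mul hwdiff.continuous))
  have hv' : ∀ t ∈ Icc x1 L, HasDerivAt v (dv t) t := by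
    intro t ht
    have h1 : HasDerivAt v (d2 * deriv f t - a2 * f t) t :=
      ((hfdiff t).hasDerivAt.const_mul d2).sub ((hwdiff t).hasDerivAt.const_mul a2)
    have h2 : d2 * deriv f t - a2 * f t = dv t := by
      rw [hfg t ht, hgdef, hdvdef]
      field_simp
      ring
    rwa [h2] at h1
  have hdvmono : MonotoneOn dv (Icc x1 L) := by
    apply monotoneOn_of_deriv_nonneg (convex_Icc x1 L)
    · exact ((continuous_const.mul hwdiff.continuous).sub continuous_const).continuousOn
    · intro t _
      exact (((hwdiff t).hasDerivAt.const_mul q).sub_const h).differentiableAt.differentiableWithinAt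
    · intro t ht
      rw [interior_Icc] at ht
      rw [(((hwdiff t).hasDerivAt.const_mul q).sub_const h).deriv]
      exact (mul_pos hq (key t ht)).le
  obtain ⟨c, hc, hcslope⟩ := exists_hasDerivAt_eq_slope v dv hx.1 hvcont.continuousOn
    (fun z hz => hv' z ⟨hz.1.le, le_trans hz.2.le hx.2.le⟩)
  obtain ⟨c', hc', hcslope'⟩ := exists_hasDerivAt_eq_slope v dv hx.2 hvcont.continuousOn
    (fun z hz => hv' z ⟨le_trans hx.1.le hz.1.le, hz.2.le⟩)
  have hvx1 : v x1 = 0 := hbc1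
  have hwL : 0 < w L := hpos L ⟨hx1L.le, le_rfl⟩
  have hvL : v L = -(a2 * w L) := by rw [hvdef]; simp [hfL]
  have hcc' : dv c ≤ dv c' :=
    hdvmono ⟨hc.1.le, le_trans hc.2.le hx.2.le⟩
      ⟨le_trans hx.1.le hc'.1.le, hc'.2.le⟩ (le_trans hc.2.le hc'.1.le)
  have hvx : v x < 0 := by
    by_contra hge
    push_neg at hge
    have h1 : 0 ≤ dv c := by
      rw [hcslope, hvx1]
      apply div_nonneg (by linarith) (by linarith [hx.1])
    have h2 : dv c' < 0 := by
      rw [hcslope']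
      apply div_neg_of_neg_of_pos _ (by linarith [hx.2])
      rw [hvL]
      linarith [mul_pos ha2 hwL]
    linarith
  have hvx' : d2 * f x - a2 * w x < 0 := hvx
  rw [div_mul_eq_mul_div, lt_div_iff₀ hd2]
  linarith
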